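/- Suppose an infinite sequence of pairs of runs (ρ^1_i, ρ^2_i) of a d-VASS is given where all ρ^1_i have the same source s and target configurations q(v_i), and all ρ^2_i have source q(v_i) and the same target t. Then there exist indices i < j such that ρ^1_i ⊴ ρ^1_j (embedding matching targets) and ρ^2_i ⊴' ρ^2_j (embedding matching sources), and consequently v_j − v_i ∈ ℕ^d and for every n ∈ ℕ there are runs s ⟶ q(v_i + n(v_j − v_i)) ⟶ t. -/

import Mathlib

/-- A configuration of a `d`-VASS with states `Q`. -/
abbrev Conf (Q : Type) (d : ℕ) := Q × (Fin d → ℕ)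

/-- A transition of a `d`-VASS with states `Q`. -/
abbrev VTrans (Q : Type) (d : ℕ) := Q × (Fin d → ℤ) × Q

/-- An anchored transition: a transition together with its source and target configurations. -/
abbrev AncTrans (Q : Type) (d : ℕ) := Conf Q d × VTrans Q d × Conf Q d

/-- Validity of an anchored transition with respect to the transition set `T`. -/
def ValidAnc {Q : Type} {d : ℕ} (T : Set (VTrans Q d)) (m : AncTrans Q d) : Prop :=
  m.2.1 ∈ T ∧ m.1.1 = m.2.1.1 ∧ m.2.2.1 = m.2.1.2.2 ∧
  ∀ i, (m.2.2.2 i : ℤ) = (m.1.2 i : ℤ) + m.2.1.2.1 i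

/-- A run: a nonempty sequence of consecutive valid anchored transitions. -/
structure Run (Q : Type) (d : ℕ) (T : Set (VTrans Q d)) where
  len : ℕ
  pos : 0 < len
  m : Fin len → AncTrans Q d
  valid : ∀ i, ValidAnc T (m i)
  chain : ∀ (i : Fin len) (h : i.1 + 1 < len), (m i).2.2 = (m ⟨i.1 + 1, h⟩).1

/-- The source configuration of a run. -/
def Run.src {Q : Type} {d : ℕ} {T : Set (VTrans Q d)} (ρ : Run Q d T) : Conf Q d :=
  (ρ.m ⟨0, ρ.pos⟩).1

/-- The target configuration of a run. -/
def Run.trg {Q : Type} {d : ℕ} {T : Set (VTrans Q d)} (ρ : Run Q d T) : Conf Q d :=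
  (ρ.m ⟨ρ.len - 1, by have := ρ.pos; omega⟩).2.2

/-- Componentwise order on configurations (equal states). -/
def ConfLe {Q : Type} {d : ℕ} (c c' : Conf Q d) : Prop := c.1 = c'.1 ∧ c.2 ≤ c'.2

/-- Domination order on anchored transitions: equal transitions, dominated configurations. -/
def AncLe {Q : Type} {d : ℕ} (m m' : AncTrans Q d) : Prop :=
  m.2.1 = m'.2.1 ∧ ConfLe m.1 m'.1 ∧ ConfLe m.2.2 m'.2.2

/-- The embedding order `⊴` on runs: the anchored transitions of `ρ` embed into those
of `ρ'`, with the last anchored transition of `ρ` matched to the last one of `ρ'`. -/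
def RunEmbed {Q : Type} {d : ℕ} {T : Set (VTrans Q d)} (ρ ρ' : Run Q d T) : Prop :=
  ∃ f : Fin ρ.len → Fin ρ'.len, StrictMono f ∧
    (f ⟨ρ.len - 1, by have := ρ.pos; omega⟩).1 = ρ'.len - 1 ∧
    ∀ j, AncLe (ρ.m j) (ρ'.m (f j))

/-- The variant `⊴'` of the embedding order matching the first anchored transitions. -/
def RunEmbed' {Q : Type} {d : ℕ} {T : Set (VTrans Q d)} (ρ ρ' : Run Q d T) : Prop :=
  ∃ f : Fin ρ.len → Fin ρ'.len, StrictMono f ∧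
    (f ⟨0, ρ.pos⟩).1 = 0 ∧
    ∀ j, AncLe (ρ.m j) (ρ'.m (f j))

/-- One step of a VASS with transition set `T`. -/
def Step {Q : Type} {d : ℕ} (T : Set (VTrans Q d)) (c c' : Conf Q d) : Prop :=
  ∃ t ∈ T, c.1 = t.1 ∧ c'.1 = t.2.2 ∧ ∀ i, (c'.2 i : ℤ) = (c.2 i : ℤ) + t.2.1 i

/-- Reachability in a VASS with transition set `T`. -/
def Reach {Q : Type} {d : ℕ} (T : Set (VTrans Q d)) : Conf Q d → Conf Q d → Prop :=
  Relation.ReflTransGen (Step T)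

/-- Adding a nonnegative vector to a configuration. -/
def confAdd {Q : Type} {d : ℕ} (c : Conf Q d) (δ : Fin d → ℕ) : Conf Q d :=
  (c.1, c.2 + δ)

/-! Encode a run as the list of its anchored transitions with the last (for `ρ₁`) or the first
(for `ρ₂`) one marked. Valid anchored transitions are well-quasi-ordered by domination (Dickson's
lemma, `T` being finite), so by Higman's lemma some `i < j` have both marked lists embedded, and
the marks force the embeddings to match the last, resp. first, transitions.

Along such an embedding `ρⱼ` follows `ρᵢ` shifted, at each embedded transition, by a gap in `ℕ^d`,
and the pieces of `ρⱼ` between consecutive embedded transitions lead from one gap to the next.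
Since VASS steps are monotone, each piece can be repeated `n` times, which multiplies every gap
by `n`: this gives `s ⟶ q(vᵢ + n(vⱼ - vᵢ))`, and symmetrically `q(vᵢ + n(vⱼ - vᵢ)) ⟶ t`. -/

section Pumping

variable {Q : Type} {d : ℕ} {T : Set (VTrans Q d)}

theorem confAdd_confAdd (c : Conf Q d) (a b : Fin d → ℕ) :
    confAdd (confAdd c a) b = confAdd c (a + b) := by
  simp [confAdd, add_assoc]

theorem confAdd_zero (c : Conf Q d) : confAdd c 0 = c := by
  simp [confAdd]

theorem Step.confAdd_right {c c' : Conf Q d} (h : Step T c c') (z : Fin d → ℕ) :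
    Step T (confAdd c z) (confAdd c' z) := by
  obtain ⟨t, ht, hsrc, htrg, heff⟩ := h
  refine ⟨t, ht, hsrc, htrg, fun i => ?_⟩
  simp only [confAdd, Pi.add_apply, Nat.cast_add, heff i]
  ring

theorem Reach.confAdd_right {c c' : Conf Q d} (h : Reach T c c') (z : Fin d → ℕ) :
    Reach T (confAdd c z) (confAdd c' z) :=
  Relation.ReflTransGen.lift (confAdd · z) (fun _ _ (hs : Step T _ _) => hs.confAdd_right z)
    _ _ h

/-- The `k`-th copy of the run is shifted by `(n - 1 - k) • a + k • b`. -/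
theorem Reach.confAdd_nsmul {c : Conf Q d} {a b : Fin d → ℕ}
    (h : Reach T (confAdd c a) (confAdd c b)) (n : ℕ) :
    Reach T (confAdd c (n • a)) (confAdd c (n • b)) := by
  induction n with
  | zero =>
    rw [zero_smul, zero_smul]
    exact Relation.ReflTransGen.refl
  | succ n ih =>
    have h₁ := h.confAdd_right (n • a)
    have h₂ := ih.confAdd_right b
    simp only [confAdd_confAdd] at h₁ h₂
    rw [succ_nsmul' a, succ_nsmul b]
    exact h₁.trans (add_comm b (n • a) ▸ h₂)

/-- Here `c` lists the configurations of a run `ρ` and `δ k` is the gap between its `k`-th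
transition and the one it is embedded into in a dominating run `ρ'`; `hgap` is the piece of `ρ'`
between two consecutive embedded transitions. -/
theorem reach_confAdd_nsmul_of_chain {c : ℕ → Conf Q d} {δ : ℕ → Fin d → ℕ} {N : ℕ}
    (hstep : ∀ k < N, Step T (c k) (c (k + 1)))
    (hgap : ∀ k, k + 1 < N →
      Reach T (confAdd (c (k + 1)) (δ k)) (confAdd (c (k + 1)) (δ (k + 1))))
    (n : ℕ) {b : ℕ} (hb : b < N) :
    Reach T (confAdd (c 0) (n • δ 0)) (confAdd (c (b + 1)) (n • δ b)) := by
  induction b with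
  | zero => exact .single ((hstep 0 hb).confAdd_right _)
  | succ b ih =>
    exact ((ih (by omega)).trans ((hgap b hb).confAdd_nsmul n)).tail
      ((hstep (b + 1) hb).confAdd_right _)

end Pumping

section Runs

variable {Q : Type} {d : ℕ} {T : Set (VTrans Q d)}

theorem ValidAnc.step {m : AncTrans Q d} (h : ValidAnc T m) : Step T m.1 m.2.2 :=
  ⟨m.2.1, h.1, h.2.1, h.2.2.1, h.2.2.2⟩

theorem ancLe_of_validAnc {m m' : AncTrans Q d} (hm : ValidAnc T m) (hm' : ValidAnc T m')
    (htr : m.2.1 = m'.2.1) (hsrc : m.1.2 ≤ m'.1.2) : AncLe m m' := by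
  refine ⟨htr, ⟨by rw [hm.2.1, hm'.2.1, htr], hsrc⟩,
    ⟨by rw [hm.2.2.1, hm'.2.2.1, htr], Pi.le_def.2 fun i => ?_⟩⟩
  have e := hm.2.2.2 i
  have e' := hm'.2.2.2 i
  have hi : m.1.2 i ≤ m'.1.2 i := hsrc i
  rw [← htr] at e'
  omega

theorem AncLe.eq_confAdd {m m' : AncTrans Q d} (hm : ValidAnc T m) (hm' : ValidAnc T m')
    (h : AncLe m m') :
    m'.1 = confAdd m.1 (m'.1.2 - m.1.2) ∧ m'.2.2 = confAdd m.2.2 (m'.1.2 - m.1.2) := by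
  obtain ⟨htr, ⟨hq, hle⟩, ⟨hq', -⟩⟩ := h
  refine ⟨Prod.ext hq.symm (funext fun i => ?_), Prod.ext hq'.symm (funext fun i => ?_)⟩
  · have hi : m.1.2 i ≤ m'.1.2 i := hle i
    simp only [confAdd, Pi.add_apply, Pi.sub_apply]
    omega
  · have hi : m.1.2 i ≤ m'.1.2 i := hle i
    have e := hm.2.2.2 i
    have e' := hm'.2.2.2 i
    rw [← htr] at e'
    simp only [confAdd, Pi.add_apply, Pi.sub_apply]
    omega

def Run.conf (ρ : Run Q d T) (k : ℕ) : Conf Q d :=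
  if h : k < ρ.len then (ρ.m ⟨k, h⟩).1 else ρ.trg

theorem Run.conf_zero (ρ : Run Q d T) : ρ.conf 0 = ρ.src :=
  dif_pos ρ.pos

theorem Run.conf_len (ρ : Run Q d T) : ρ.conf ρ.len = ρ.trg :=
  dif_neg (lt_irrefl _)

theorem Run.conf_val (ρ : Run Q d T) (k : Fin ρ.len) : ρ.conf k = (ρ.m k).1 :=
  dif_pos k.isLt

theorem Run.conf_val_add_one (ρ : Run Q d T) (k : Fin ρ.len) : ρ.conf (k + 1) = (ρ.m k).2.2 := by
  by_cases h : k.1 + 1 < ρ.len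
  · rw [Run.conf, dif_pos h, ρ.chain k h]
  · have hk : k = ⟨ρ.len - 1, Nat.sub_lt ρ.pos Nat.one_pos⟩ := by
      ext
      simp only
      omega
    rw [Run.conf, dif_neg h, Run.trg, hk]

theorem Run.step_conf (ρ : Run Q d T) {k : ℕ} (hk : k < ρ.len) :
    Step T (ρ.conf k) (ρ.conf (k + 1)) := by
  rw [ρ.conf_val ⟨k, hk⟩, ρ.conf_val_add_one ⟨k, hk⟩]
  exact (ρ.valid _).step

theorem Run.reach_conf (ρ : Run Q d T) {a b : ℕ} (hab : a ≤ b) (hb : b ≤ ρ.len) :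
    Reach T (ρ.conf a) (ρ.conf b) :=
  Relation.ReflTransGen.lift ρ.conf (fun _ _ (h : Step T _ _) => h) a b <|
    reflTransGen_of_succ_of_le (fun i j => Step T (ρ.conf i) (ρ.conf j))
      (fun i hi => by
        simpa only [Order.succ_eq_add_one] using ρ.step_conf (lt_of_lt_of_le hi.2 hb)) hab

theorem Run.exists_reach_confAdd_nsmul {ρ ρ' : Run Q d T} {f : Fin ρ.len → Fin ρ'.len}
    (hf : StrictMono f) (hle : ∀ k, AncLe (ρ.m k) (ρ'.m (f k))) :
    ∃ δ₀ δ₁ : Fin d → ℕ, ρ'.conf (f ⟨0, ρ.pos⟩) = confAdd ρ.src δ₀ ∧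
      ρ'.conf (f ⟨ρ.len - 1, by have := ρ.pos; omega⟩ + 1) = confAdd ρ.trg δ₁ ∧
      ∀ n : ℕ, Reach T (confAdd ρ.src (n • δ₀)) (confAdd ρ.trg (n • δ₁)) := by
  let δ : ℕ → Fin d → ℕ := fun k =>
    if h : k < ρ.len then (ρ'.m (f ⟨k, h⟩)).1.2 - (ρ.m ⟨k, h⟩).1.2 else 0
  have hδ : ∀ k : Fin ρ.len, ρ'.conf (f k) = confAdd (ρ.conf k) (δ k) ∧
      ρ'.conf (f k + 1) = confAdd (ρ.conf (k + 1)) (δ k) := fun k => by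
    simpa only [δ, dif_pos k.isLt, Run.conf_val, Run.conf_val_add_one]
      using (hle k).eq_confAdd (ρ.valid k) (ρ'.valid (f k))
  have hpos := ρ.pos
  have hlast : ρ.len - 1 + 1 = ρ.len := Nat.sub_add_cancel hpos
  refine ⟨δ 0, δ (ρ.len - 1), ?_, ?_, fun n => ?_⟩
  · simpa only [ρ.conf_zero] using (hδ ⟨0, ρ.pos⟩).1
  · simpa only [hlast, ρ.conf_len] using (hδ ⟨ρ.len - 1, by omega⟩).2
  · have hgap : ∀ k, k + 1 < ρ.len → Reach T (confAdd (ρ.conf (k + 1)) (δ k))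
        (confAdd (ρ.conf (k + 1)) (δ (k + 1))) := fun k hk => by
      have hlt : f ⟨k, by omega⟩ < f ⟨k + 1, hk⟩ := hf (Fin.mk_lt_mk.2 (Nat.lt_succ_self k))
      rw [← (hδ ⟨k, by omega⟩).2, ← (hδ ⟨k + 1, hk⟩).1]
      exact ρ'.reach_conf hlt (f ⟨k + 1, hk⟩).isLt.le
    simpa only [ρ.conf_zero, hlast, ρ.conf_len] using
      reach_confAdd_nsmul_of_chain (c := ρ.conf) (N := ρ.len) (fun k hk => ρ.step_conf hk) hgap n
        (b := ρ.len - 1) (by omega)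

theorem RunEmbed.exists_reach_confAdd_nsmul {ρ ρ' : Run Q d T} (h : RunEmbed ρ ρ')
    (hsrc : ρ.src = ρ'.src) :
    ∃ δ, ρ'.trg = confAdd ρ.trg δ ∧ ∀ n : ℕ, Reach T ρ.src (confAdd ρ.trg (n • δ)) := by
  obtain ⟨f, hf, hlast, hle⟩ := h
  obtain ⟨δ₀, δ₁, h₀, h₁, hreach⟩ := Run.exists_reach_confAdd_nsmul hf hle
  have hpre : Reach T (confAdd ρ.src 0) (confAdd ρ.src δ₀) := by
    rw [confAdd_zero, ← h₀, hsrc, ← ρ'.conf_zero]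
    exact ρ'.reach_conf (Nat.zero_le _) (f _).isLt.le
  refine ⟨δ₁, ?_, fun n => ?_⟩
  · rwa [hlast, Nat.sub_add_cancel ρ'.pos, ρ'.conf_len] at h₁
  · have := (hpre.confAdd_nsmul n).trans (hreach n)
    rwa [smul_zero, confAdd_zero] at this

theorem RunEmbed'.exists_reach_confAdd_nsmul {ρ ρ' : Run Q d T} (h : RunEmbed' ρ ρ')
    (htrg : ρ.trg = ρ'.trg) :
    ∃ δ, ρ'.src = confAdd ρ.src δ ∧ ∀ n : ℕ, Reach T (confAdd ρ.src (n • δ)) ρ.trg := by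
  obtain ⟨f, hf, hfirst, hle⟩ := h
  obtain ⟨δ₀, δ₁, h₀, h₁, hreach⟩ := Run.exists_reach_confAdd_nsmul hf hle
  have hsuf : Reach T (confAdd ρ.trg δ₁) (confAdd ρ.trg 0) := by
    rw [confAdd_zero, ← h₁, htrg, ← ρ'.conf_len]
    exact ρ'.reach_conf (f _).isLt ρ'.len.le_refl
  refine ⟨δ₀, ?_, fun n => ?_⟩
  · rwa [hfirst, ρ'.conf_zero] at h₀
  · have := (hreach n).trans (hsuf.confAdd_nsmul n)
    rwa [smul_zero, confAdd_zero] at this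

end Runs

section WellQuasiOrder

variable {Q : Type} {d : ℕ} {T : Set (VTrans Q d)}

instance : IsPreorder (AncTrans Q d) AncLe where
  refl _ := ⟨rfl, ⟨rfl, le_rfl⟩, ⟨rfl, le_rfl⟩⟩
  trans _ _ _ h h' :=
    ⟨h.1.trans h'.1, ⟨h.2.1.1.trans h'.2.1.1, h.2.1.2.trans h'.2.1.2⟩,
      ⟨h.2.2.1.trans h'.2.2.1, h.2.2.2.trans h'.2.2.2⟩⟩

/-- A valid anchored transition is determined by its transition and its source, so this is
Dickson's lemma on `T × ℕ^d`. -/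
theorem partiallyWellOrderedOn_validAnc (hT : T.Finite) :
    {m : AncTrans Q d | ValidAnc T m}.PartiallyWellOrderedOn AncLe := by
  rw [Set.partiallyWellOrderedOn_iff_exists_lt]
  intro f hf
  have hpwo := (hT.partiallyWellOrderedOn (r := (· = ·))).prod
    (Set.isPWO_univ_iff.2 (inferInstance : WellQuasiOrderedLE (Fin d → ℕ)))
  obtain ⟨i, j, hij, htr, hsrc⟩ :=
    hpwo.exists_lt (f := fun n => ((f n).2.1, (f n).1.2)) fun n => ⟨(hf n).1, trivial⟩
  exact ⟨i, j, hij, ancLe_of_validAnc (hf i) (hf j) htr hsrc⟩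

def MarkedAncLe (x y : AncTrans Q d × Bool) : Prop := AncLe x.1 y.1 ∧ x.2 = y.2

instance : IsPreorder (AncTrans Q d × Bool) MarkedAncLe where
  refl x := ⟨refl x.1, rfl⟩
  trans _ _ _ h h' := ⟨_root_.trans h.1 h'.1, h.2.trans h'.2⟩

/-- Marking the `i`-th transition forces embeddings of such lists to send it to the marked
transition of the other run. -/
def Run.markedAt (ρ : Run Q d T) (i : ℕ) : List (AncTrans Q d × Bool) :=
  List.ofFn fun k : Fin ρ.len => (ρ.m k, decide (k.1 = i))

theorem Run.validAnc_of_mem_markedAt (ρ : Run Q d T) (i : ℕ) :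
    ∀ x ∈ ρ.markedAt i, x ∈ {m : AncTrans Q d | ValidAnc T m} ×ˢ Set.univ := by
  intro x hx
  obtain ⟨k, rfl⟩ := List.mem_ofFn.1 hx
  exact ⟨ρ.valid k, trivial⟩

theorem List.SublistForall₂.exists_strictMono_ofFn {α : Type*} {R : α → α → Prop} {n m : ℕ}
    {a : Fin n → α} {b : Fin m → α} (h : SublistForall₂ R (ofFn a) (ofFn b)) :
    ∃ f : Fin n → Fin m, StrictMono f ∧ ∀ k, R (a k) (b (f k)) := by
  obtain ⟨l, hRl, hl⟩ := sublistForall₂_iff.1 h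
  obtain ⟨e, he⟩ := sublist_iff_exists_fin_orderEmbedding_get_eq.1 hl
  obtain ⟨hlen, hget⟩ := forall₂_iff_get.1 hRl
  have hn : l.length = n := by simpa using hlen.symm
  refine ⟨fun k => Fin.cast (length_ofFn) (e (Fin.cast hn.symm k)),
    fun k k' hk => e.strictMono (Fin.cast_strictMono _ hk), fun k => ?_⟩
  have := hget k (by simp) (by omega)
  rw [he] at this
  simpa [Fin.cast] using this

theorem Run.exists_strictMono_of_markedAt {ρ ρ' : Run Q d T} {i i' : ℕ}
    (h : List.SublistForall₂ MarkedAncLe (ρ.markedAt i) (ρ'.markedAt i')) :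
    ∃ f : Fin ρ.len → Fin ρ'.len, StrictMono f ∧ (∀ k : Fin ρ.len, k.1 = i → (f k).1 = i') ∧
      ∀ k, AncLe (ρ.m k) (ρ'.m (f k)) := by
  obtain ⟨f, hf, hR⟩ := h.exists_strictMono_ofFn
  exact ⟨f, hf, fun k hk => by simpa [hk] using (hR k).2, fun k => (hR k).1⟩

theorem exists_runEmbed_runEmbed' (hT : T.Finite) (ρ₁ ρ₂ : ℕ → Run Q d T) :
    ∃ i j, i < j ∧ RunEmbed (ρ₁ i) (ρ₁ j) ∧ RunEmbed' (ρ₂ i) (ρ₂ j) := by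
  have hmarked := (partiallyWellOrderedOn_validAnc hT).prod
    (Set.finite_univ.partiallyWellOrderedOn (r := (· = ·)) (α := Bool))
  have hlists := hmarked.partiallyWellOrderedOn_sublistForall₂ MarkedAncLe
  have : IsPreorder _ (List.SublistForall₂ (MarkedAncLe (Q := Q) (d := d))) := {}
  obtain ⟨i, j, hij, h₁, h₂⟩ := (hlists.prod hlists).exists_lt
    (f := fun n => ((ρ₁ n).markedAt ((ρ₁ n).len - 1), (ρ₂ n).markedAt 0))
    fun n => ⟨Run.validAnc_of_mem_markedAt _ _, Run.validAnc_of_mem_markedAt _ _⟩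
  obtain ⟨f₁, hf₁, hlast, hle₁⟩ := Run.exists_strictMono_of_markedAt h₁
  obtain ⟨f₂, hf₂, hfirst, hle₂⟩ := Run.exists_strictMono_of_markedAt h₂
  exact ⟨i, j, hij, ⟨f₁, hf₁, hlast _ rfl, hle₁⟩, ⟨f₂, hf₂, hfirst _ rfl, hle₂⟩⟩

end WellQuasiOrder

/-- From an infinite family of runs s ⟶ q(vᵢ) ⟶ t one can extract a dominating pair and
pump: for every n there are runs s ⟶ q(vᵢ + n(vⱼ − vᵢ)) ⟶ t. -/
theorem stmt_15 {Q : Type} {d : ℕ} {T : Set (VTrans Q d)} (hT : T.Finite)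
    (s t : Conf Q d) (q : Q) (v : ℕ → (Fin d → ℕ))
    (ρ₁ ρ₂ : ℕ → Run Q d T)
    (hρ₁ : ∀ i, (ρ₁ i).src = s ∧ (ρ₁ i).trg = (q, v i))
    (hρ₂ : ∀ i, (ρ₂ i).src = (q, v i) ∧ (ρ₂ i).trg = t) :
    ∃ i j : ℕ, i < j ∧ RunEmbed (ρ₁ i) (ρ₁ j) ∧ RunEmbed' (ρ₂ i) (ρ₂ j) ∧
      v i ≤ v j ∧
      ∀ n : ℕ,
        Reach T s (q, fun l => v i l + n * (v j l - v i l)) ∧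
        Reach T (q, fun l => v i l + n * (v j l - v i l)) t := by
  obtain ⟨i, j, hij, h₁, h₂⟩ := exists_runEmbed_runEmbed' hT ρ₁ ρ₂
  obtain ⟨δ₁, hδ₁, hreach₁⟩ := h₁.exists_reach_confAdd_nsmul ((hρ₁ i).1.trans (hρ₁ j).1.symm)
  obtain ⟨δ₂, hδ₂, hreach₂⟩ := h₂.exists_reach_confAdd_nsmul ((hρ₂ i).2.trans (hρ₂ j).2.symm)
  rw [(hρ₁ i).2, (hρ₁ j).2, confAdd, Prod.mk.injEq] at hδ₁
  rw [(hρ₂ i).1, (hρ₂ j).1, confAdd, Prod.mk.injEq] at hδ₂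
  obtain rfl : δ₁ = v j - v i := by simp [hδ₁.2]
  obtain rfl : δ₂ = v j - v i := by simp [hδ₂.2]
  refine ⟨i, j, hij, h₁, h₂, hδ₁.2 ▸ le_self_add, fun n => ⟨?_, ?_⟩⟩
  · rw [(hρ₁ i).1, (hρ₁ i).2] at hreach₁
    exact hreach₁ n
  · rw [(hρ₂ i).1, (hρ₂ i).2] at hreach₂
    exact hreach₂ n
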